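/- In the up-sweep recursion tree on an array of n elements, exactly n−1 internal additions are performed, and after the up-sweep, the values stored in positions 1 through n−1 together with the total sum in position n determine all left-subproblem sums needed by the down-sweep (i.e., for every recursive segment [s,t] with s<t, the left-half sum is stored at index ⌊(s+t)/2⌋). -/
import Mathlib


/-- Up-Sweep(A, s, t): if `s = t` return; otherwise recursively up-sweep the two
halves `[s, k]` and `[k+1, t]` with `k = ⌊(s+t)/2⌋`, then set `A t ← A t + A k`. -/
def upSweep {M : Type*} [AddCommMonoid M] (A : ℕ → M) (s t : ℕ) : ℕ → M :=
  if _h : s < t then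
    let A' := upSweep (upSweep A s ((s + t) / 2)) ((s + t) / 2 + 1) t
    Function.update A' t (A' t + A' ((s + t) / 2))
  else A
termination_by t - s
decreasing_by all_goals omega

/-- The number of internal additions performed by `Up-Sweep` on segment `[s, t]`. -/
def upSweepAdds (s t : ℕ) : ℕ :=
  if _h : s < t then upSweepAdds s ((s + t) / 2) + upSweepAdds ((s + t) / 2 + 1) t + 1
  else 0
termination_by t - s
decreasing_by all_goals omega

/-- The segments `[a, b]` appearing in the recursion tree of `Up-Sweep` rooted at
the segment `[s, t]`. -/
inductive Seg (s t : ℕ) : ℕ → ℕ → Prop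
  | root : Seg s t s t
  | left {a b : ℕ} : Seg s t a b → a < b → Seg s t a ((a + b) / 2)
  | right {a b : ℕ} : Seg s t a b → a < b → Seg s t ((a + b) / 2 + 1) b


theorem upSweep_outside {M : Type*} [AddCommMonoid M] (A : ℕ → M) (s t i : ℕ)
    (h : i < s ∨ t < i) : upSweep A s t i = A i := by
  rw [upSweep]
  split
  · next hst =>
    have hit : i ≠ t := by omega
    simp only [Function.update_of_ne hit]
    rw [upSweep_outside _ _ _ _ (by omega), upSweep_outside _ _ _ _ (by omega)]
  · rfl
termination_by t - s
decreasing_by all_goals omega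

theorem upSweep_last {M : Type*} [AddCommMonoid M] (A : ℕ → M) (s t : ℕ)
    (h : s ≤ t) : upSweep A s t t = ∑ i ∈ Finset.Icc s t, A i := by
  rw [upSweep]
  split
  · next hst =>
    set k := (s + t) / 2 with hk
    simp only [Function.update_self]
    have h1 : upSweep (upSweep A s k) (k + 1) t t
        = ∑ i ∈ Finset.Icc (k + 1) t, upSweep A s k i :=
      upSweep_last _ _ _ (by omega)
    have h2 : upSweep (upSweep A s k) (k + 1) t k = upSweep A s k k :=
      upSweep_outside _ _ _ _ (by omega)
    have h3 : upSweep A s k k = ∑ i ∈ Finset.Icc s k, A i :=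
      upSweep_last _ _ _ (by omega)
    rw [h1, h2, h3]
    have h4 : ∑ i ∈ Finset.Icc (k + 1) t, upSweep A s k i
        = ∑ i ∈ Finset.Icc (k + 1) t, A i := by
      refine Finset.sum_congr rfl fun i hi => ?_
      simp only [Finset.mem_Icc] at hi
      exact upSweep_outside _ _ _ _ (by omega)
    rw [h4, add_comm]
    rw [← Finset.sum_union]
    · congr 1
      ext x
      simp only [Finset.mem_union, Finset.mem_Icc]
      omega
    · rw [Finset.disjoint_left]
      intro x hx hx'
      simp only [Finset.mem_Icc] at hx hx'
      omega
  · next hst =>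
    have : s = t := by omega
    subst this
    simp
termination_by t - s
decreasing_by all_goals omega

theorem Seg.bounds {s t a b : ℕ} (h : Seg s t a b) (hst : s ≤ t) :
    s ≤ a ∧ a ≤ b ∧ b ≤ t := by
  induction h with
  | root => omega
  | left _ hab ih => omega
  | right _ hab ih => omega

theorem Seg.rec_cases {s t a b : ℕ} (h : Seg s t a b) (hst : s < t) :
    (a = s ∧ b = t) ∨ Seg s ((s + t) / 2) a b ∨ Seg ((s + t) / 2 + 1) t a b := by
  induction h with
  | root => exact Or.inl ⟨rfl, rfl⟩
  | left h hab ih =>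
    rcases ih with ⟨rfl, rfl⟩ | hL | hR
    · exact Or.inr (Or.inl Seg.root)
    · exact Or.inr (Or.inl (hL.left hab))
    · exact Or.inr (Or.inr (hR.left hab))
  | right h hab ih =>
    rcases ih with ⟨rfl, rfl⟩ | hL | hR
    · exact Or.inr (Or.inr Seg.root)
    · exact Or.inr (Or.inl (hL.right hab))
    · exact Or.inr (Or.inr (hR.right hab))

theorem Seg.lt {s t a b : ℕ} (h : Seg s t a b) : a < b → s < t := by
  induction h with
  | root => exact fun h => h
  | left _ _ ih => exact fun h => ih (by omega)
  | right _ _ ih => exact fun h => ih (by omega)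

theorem upSweep_mid {M : Type*} [AddCommMonoid M] (A : ℕ → M) (s t a b : ℕ)
    (h : Seg s t a b) (hab : a < b) :
    upSweep A s t ((a + b) / 2) = ∑ i ∈ Finset.Icc a ((a + b) / 2), A i := by
  have hst : s < t := h.lt hab
  have hb := h.bounds hst.le
  rw [upSweep, dif_pos hst]
  set k := (s + t) / 2 with hk
  have hmt : (a + b) / 2 ≠ t := by omega
  simp only [Function.update_of_ne hmt]
  rcases h.rec_cases hst with ⟨rfl, rfl⟩ | hL | hR
  · rw [upSweep_outside _ _ _ _ (by omega), upSweep_last _ _ _ (by omega)]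
  · have hbL := hL.bounds (by omega)
    rw [upSweep_outside _ _ _ _ (by omega)]
    exact upSweep_mid A s k a b hL hab
  · have hbR := hR.bounds (by omega)
    rw [upSweep_mid (upSweep A s k) (k + 1) t a b hR hab]
    refine Finset.sum_congr rfl fun i hi => ?_
    simp only [Finset.mem_Icc] at hi
    exact upSweep_outside _ _ _ _ (by omega)
termination_by t - s
decreasing_by all_goals omega

theorem upSweepAdds_eq (s t : ℕ) : upSweepAdds s t = t - s := by
  rw [upSweepAdds]
  split
  · next hst =>
    rw [upSweepAdds_eq, upSweepAdds_eq]
    omega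
  · omega
termination_by t - s
decreasing_by all_goals omega

/-- On an array of `n` elements, the up-sweep performs exactly `n - 1` internal
additions, and afterwards position `n` holds the total sum while, for every
internal segment `[a, b]` of the recursion tree, the left-half sum
`A a + ... + A ⌊(a+b)/2⌋` is stored at index `⌊(a+b)/2⌋` — exactly the values
needed by the down-sweep. -/
theorem upSweep_adds_and_left_sums {M : Type*} [AddCommMonoid M] (A : ℕ → M)
    (n : ℕ) (hn : 1 ≤ n) :
    upSweepAdds 1 n = n - 1 ∧
    upSweep A 1 n n = ∑ i ∈ Finset.Icc 1 n, A i ∧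
    (∀ a b : ℕ, Seg 1 n a b → a < b →
      upSweep A 1 n ((a + b) / 2) = ∑ i ∈ Finset.Icc a ((a + b) / 2), A i) := by
  refine ⟨by rw [upSweepAdds_eq], upSweep_last A 1 n hn, fun a b h hab => upSweep_mid A 1 n a b h hab⟩
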